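/- arXiv:1407.2673 — 3 statements merged into one kernel-verified Lean document; each statement's English description precedes it below -/
import Mathlib

section
/- Let X be a topological space which is a finite disjoint union of locally closed subsets Y_1, …, Y_m. Then for every irreducible component C of X there exists an index i and an irreducible component D of Y_i such that C equals the closure of D in X; in particular C ∩ Y_i is dense in C. -/
/-!
An irreducible component `C` is covered by the finitely many closed sets `closure (C ∩ Y i)`,
so by irreducibility `C ∩ Y i` is dense in `C` for some `i`. Then `C ∩ Y i` is irreducible, hence
lies in an irreducible component `D` of `Y i`; the closure of `D` in `X` is irreducible and
contains `C`, so it equals `C` by maximality.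
-/

section

open Set Topology

theorem Topology.IsInducing.isPreirreducible_image_iff {X Y : Type*} [TopologicalSpace X]
    [TopologicalSpace Y] {f : X → Y} (hf : IsInducing f) {s : Set X} :
    IsPreirreducible (f '' s) ↔ IsPreirreducible s := by
  refine ⟨fun h U V hU hV ⟨x, hxs, hxU⟩ ⟨y, hys, hyV⟩ => ?_,
    fun h => h.image f hf.continuous.continuousOn⟩
  obtain ⟨U', hU', rfl⟩ := hf.isOpen_iff.mp hU
  obtain ⟨V', hV', rfl⟩ := hf.isOpen_iff.mp hV
  obtain ⟨_, ⟨z, hzs, rfl⟩, hzU, hzV⟩ :=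
    h U' V' hU' hV' ⟨f x, mem_image_of_mem f hxs, hxU⟩ ⟨f y, mem_image_of_mem f hys, hyV⟩
  exact ⟨z, hzs, hzU, hzV⟩

theorem Topology.IsInducing.isIrreducible_image_iff {X Y : Type*} [TopologicalSpace X]
    [TopologicalSpace Y] {f : X → Y} (hf : IsInducing f) {s : Set X} :
    IsIrreducible (f '' s) ↔ IsIrreducible s :=
  and_congr image_nonempty hf.isPreirreducible_image_iff

variable {X : Type*} [TopologicalSpace X]

theorem IsIrreducible.exists_subset_closure_inter {ι : Type*} [Finite ι] {C : Set X}
    (hC : IsIrreducible C) {Y : ι → Set X} (hCY : C ⊆ ⋃ i, Y i) :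
    ∃ i, C ⊆ closure (C ∩ Y i) := by
  have hfin := finite_range fun i => closure (C ∩ Y i)
  have hcover : C ⊆ ⋃₀ ↑hfin.toFinset := by
    rw [Finite.coe_toFinset, sUnion_range]
    intro x hx
    obtain ⟨i, hi⟩ := mem_iUnion.mp (hCY hx)
    exact mem_iUnion.mpr ⟨i, subset_closure ⟨hx, hi⟩⟩
  obtain ⟨_, hz, hCz⟩ := isIrreducible_iff_sUnion_isClosed.mp hC hfin.toFinset
    (by simp [isClosed_closure]) hcover
  obtain ⟨i, rfl⟩ := (Finite.mem_toFinset hfin).mp hz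
  exact ⟨i, hCz⟩

theorem exists_mem_irreducibleComponents_subtype_closure_eq {S C : Set X}
    (hC : C ∈ irreducibleComponents X) (hCS : C ⊆ closure (C ∩ S)) :
    ∃ D ∈ irreducibleComponents S, C = closure (Subtype.val '' D) := by
  have hclosure : closure (C ∩ S) = C :=
    ((isClosed_of_mem_irreducibleComponents C hC).closure_subset_iff.mpr
      inter_subset_left).antisymm hCS
  have hD₀ : Subtype.val '' (Subtype.val ⁻¹' C : Set S) = C ∩ S := by
    rw [Subtype.image_preimage_coe, inter_comm]
  have hD₀irr : IsIrreducible (Subtype.val ⁻¹' C : Set S) := by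
    rw [← IsInducing.subtypeVal.isIrreducible_image_iff, hD₀, ← isIrreducible_iff_closure,
      hclosure]
    exact hC.1
  obtain ⟨D, hD, hD₀D⟩ := exists_mem_irreducibleComponents_subset_of_isIrreducible _ hD₀irr
  have hCD : C ⊆ closure (Subtype.val '' D) :=
    calc C ⊆ closure (C ∩ S) := hCS
      _ = closure (Subtype.val '' (Subtype.val ⁻¹' C : Set S)) := by rw [hD₀]
      _ ⊆ closure (Subtype.val '' D) := closure_mono (image_mono hD₀D)
  have hDirr : IsIrreducible (closure (Subtype.val '' D)) :=
    (hD.1.image _ continuous_subtype_val.continuousOn).closure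
  exact ⟨D, hD, hCD.antisymm (hC.2 hDirr hCD)⟩

end

theorem irreducibleComponent_eq_closure_of_locallyClosed_partition_general
    {X : Type*} [TopologicalSpace X] {m : ℕ} (Y : Fin m → Set X)
    (hcover : (⋃ i, Y i) = Set.univ)
    (C : Set X) (hC : C ∈ irreducibleComponents X) :
    ∃ (i : Fin m) (D : Set (Y i)), D ∈ irreducibleComponents (Y i) ∧
      C = closure (Subtype.val '' D) ∧ C ⊆ closure (C ∩ Y i) := by
  obtain ⟨i, hCi⟩ := hC.1.exists_subset_closure_inter (hcover ▸ Set.subset_univ C)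
  obtain ⟨D, hD, hCD⟩ := exists_mem_irreducibleComponents_subtype_closure_eq hC hCi
  exact ⟨i, D, hD, hCD, hCi⟩

/-- If a topological space `X` with finitely many irreducible components is the finite
disjoint union of locally closed subsets `Y i`, then every irreducible component `C` of `X`
is the closure of an irreducible component `D` of some `Y i`; in particular `C ∩ Y i` is
dense in `C`. -/
theorem irreducibleComponent_eq_closure_of_locallyClosed_partition
    {X : Type*} [TopologicalSpace X] {m : ℕ} (Y : Fin m → Set X)
    (hlc : ∀ i, IsLocallyClosed (Y i))
    (hcover : (⋃ i, Y i) = Set.univ)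
    (hdisj : Pairwise (Function.onFun Disjoint Y))
    (hfin : (irreducibleComponents X).Finite)
    (C : Set X) (hC : C ∈ irreducibleComponents X) :
    ∃ (i : Fin m) (D : Set (Y i)), D ∈ irreducibleComponents (Y i) ∧
      C = closure (Subtype.val '' D) ∧ C ⊆ closure (C ∩ Y i) :=
  irreducibleComponent_eq_closure_of_locallyClosed_partition_general Y hcover C hC
end

section
/- Let Q be a finite quiver with vertex set {1, …, n}, let a_{ij} denote the number of arrows from vertex i to vertex j, fix L ≥ 0, and let m = (m_0, …, m_L) be a sequence of vectors in ℕ^n. Consider 'skeleta': collections σ = σ_0 ⊔ σ_1 ⊔ … ⊔ σ_L where σ_l is a finite set of pairs (p, r) with p a path of length l in Q and r an index from a fixed multiset of starting vertices realizing m_0 (i.e., σ_0 consists of exactly m_{0,i} length-zero paths at vertex i for each i), such that σ is closed under passing to initial subpaths and, for every l and j, the number of pairs (p, r) ∈ σ_l with p ending at vertex j equals m_{l,j}. Then such a skeleton exists if and only if for every l with 0 ≤ l < L and every vertex j: ∑_{i=1}^{n} a_{ij}·m_{l,i} ≥ m_{l+1,j}. -/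
universe uv uq

/-- The collection of all paths of a quiver, bundled with their endpoints. -/
abbrev QPath (V : Type uv) [Quiver.{uq + 1} V] := Σ a b : V, Quiver.Path a b

/-- A skeleton compatible with the layer data `m = (m_0, …, m_L)`: a finite set of pairs
`(p, r)` where `p` is a path of length at most `L` starting at the vertex `e r` of the
`r`-th top element, closed under initial subpaths, such that for every `l ≤ L` and vertex
`j`, exactly `m l j` of its paths of length `l` end at `j`. -/
def IsSkeleton {V : Type uv} [Quiver.{uq + 1} V] (L : ℕ) (m : ℕ → V → ℕ) (t : ℕ)
    (e : Fin t → V) (σ : Set (QPath V × Fin t)) : Prop :=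
  σ.Finite ∧
  (∀ x ∈ σ, x.1.1 = e x.2 ∧ x.1.2.2.length ≤ L) ∧
  (∀ x ∈ σ, ∀ (b : V) (p' : Quiver.Path x.1.1 b) (p'' : Quiver.Path b x.1.2.1),
    x.1.2.2 = p'.comp p'' → (⟨⟨x.1.1, b, p'⟩, x.2⟩ : QPath V × Fin t) ∈ σ) ∧
  (∀ l ≤ L, ∀ j : V,
    {x ∈ σ | x.1.2.2.length = l ∧ x.1.2.1 = j}.ncard = m l j)

/-!
A path of length `l + 1` is a path of length `l` followed by one arrow, and in a skeleton the
shorter path lies in the skeleton as well. Hence the paths of length `l + 1` ending at `j` are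
among the one-arrow extensions of the `m l i` paths of length `l` ending at the various `i`,
and there are `∑ i, a i j * m l i` of those. Conversely, start with one trivial path per label
and build the skeleton layer by layer, keeping `m (l + 1) j` of the one-arrow extensions of
layer `l` that end at `j`; a set built from one-arrow extensions of its own elements is closed
under initial subpaths.
-/

open Finset

theorem Finset.exists_subset_card_filter_eq {α β : Type*} [DecidableEq α] [Fintype β]
    [DecidableEq β] (S : Finset α) (f : α → β) (k : β → ℕ)
    (hk : ∀ b, k b ≤ #(S.filter (f · = b))) :
    ∃ B ⊆ S, ∀ b, #(B.filter (f · = b)) = k b := by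
  choose C hCS hC using fun b => exists_subset_card_eq (hk b)
  have hfiber : ∀ b, ∀ x ∈ C b, f x = b := fun b x hx => (mem_filter.1 (hCS b hx)).2
  refine ⟨univ.biUnion C, biUnion_subset.2 fun b _ => (hCS b).trans (filter_subset _ _),
    fun b => ?_⟩
  have : (univ.biUnion C).filter (f · = b) = C b := by
    ext x
    simp only [mem_filter, mem_biUnion, mem_univ, true_and]
    constructor
    · rintro ⟨⟨b', hx⟩, rfl⟩
      rwa [hfiber b' x hx]
    · exact fun hx => ⟨⟨b, hx⟩, hfiber b x hx⟩
  rw [this, hC]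

theorem Finset.ncard_sep_coe {α : Type*} (s : Finset α) (p : α → Prop) [DecidablePred p] :
    {x ∈ (s : Set α) | p x}.ncard = #(s.filter p) :=
  (congrArg Set.ncard (coe_filter p s).symm).trans (Set.ncard_coe_finset _)

namespace QPath

variable {V : Type uv} [Quiver.{uq + 1} V]

def cons (x : QPath V) {j : V} (α : x.2.1 ⟶ j) : QPath V :=
  ⟨x.1, j, x.2.2.cons α⟩

theorem eq_and_heq_of_cons_eq_cons {x y : QPath V} {j k : V} {α : x.2.1 ⟶ j} {β : y.2.1 ⟶ k}
    (h : x.cons α = y.cons β) : x = y ∧ HEq α β := by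
  obtain ⟨a, c, p⟩ := x
  obtain ⟨a', c', p'⟩ := y
  simp only [cons, Sigma.mk.inj_iff] at h
  obtain ⟨rfl, h⟩ := h
  obtain ⟨rfl, h⟩ := Sigma.mk.inj_iff.1 (eq_of_heq h)
  have h := eq_of_heq h
  obtain rfl := Quiver.Path.obj_eq_of_cons_eq_cons h
  obtain rfl := eq_of_heq (Quiver.Path.heq_of_cons_eq_cons h)
  exact ⟨rfl, Quiver.Path.hom_heq_of_cons_eq_cons h⟩

section Labelled

open scoped Classical

variable {ι : Type*}

/-- The closure condition of `IsSkeleton`, for paths labelled by an arbitrary type. -/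
def PrefixClosed (σ : Set (QPath V × ι)) : Prop :=
  ∀ x ∈ σ, ∀ (b : V) (p' : Quiver.Path x.1.1 b) (p'' : Quiver.Path b x.1.2.1),
    x.1.2.2 = p'.comp p'' → (⟨⟨x.1.1, b, p'⟩, x.2⟩ : QPath V × ι) ∈ σ

theorem prefixClosed_iff {σ : Set (QPath V × ι)} :
    PrefixClosed σ ↔
      ∀ (y : QPath V) (j : V) (α : y.2.1 ⟶ j) (r : ι), (y.cons α, r) ∈ σ → (y, r) ∈ σ := by
  refine ⟨fun h y j α r hy => h _ hy y.2.1 y.2.2 (Quiver.Path.nil.cons α) rfl, fun h => ?_⟩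
  suffices ∀ {a b c : V} (p' : Quiver.Path a b) (p'' : Quiver.Path b c) (r : ι),
      (⟨a, c, p'.comp p''⟩, r) ∈ σ → (⟨a, b, p'⟩, r) ∈ σ from
    fun x hx b p' p'' hp => this p' p'' x.2 (hp ▸ hx)
  intro a b c p' p'' r hx
  induction p'' with
  | nil => exact hx
  | cons q α ih => exact ih (h ⟨a, _, p'.comp q⟩ _ α r hx)

variable [∀ a b : V, Fintype (a ⟶ b)]

def extensions (x : QPath V × ι) (j : V) : Finset (QPath V × ι) :=
  univ.map ⟨fun α : x.1.2.1 ⟶ j => (x.1.cons α, x.2),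
    fun _ _ h => eq_of_heq (eq_and_heq_of_cons_eq_cons (Prod.ext_iff.1 h).1).2⟩

theorem mem_extensions {x z : QPath V × ι} {j : V} :
    z ∈ extensions x j ↔ ∃ α : x.1.2.1 ⟶ j, (x.1.cons α, x.2) = z := by
  simp only [extensions, mem_map, mem_univ, true_and]
  rfl

theorem card_extensions (x : QPath V × ι) (j : V) :
    #(extensions x j) = Fintype.card (x.1.2.1 ⟶ j) := by
  rw [extensions, card_map, card_univ]

theorem disjoint_extensions {x y : QPath V × ι} (hxy : x ≠ y) (j : V) :
    Disjoint (extensions x j) (extensions y j) := by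
  refine disjoint_left.2 fun z hx hy => hxy ?_
  obtain ⟨α, rfl⟩ := mem_extensions.1 hx
  obtain ⟨β, h⟩ := mem_extensions.1 hy
  obtain ⟨h₁, h₂⟩ := Prod.ext_iff.1 h
  exact Prod.ext (eq_and_heq_of_cons_eq_cons h₁).1.symm h₂.symm

variable [Fintype V]

theorem card_biUnion_extensions (A : Finset (QPath V × ι)) (j : V) :
    #(A.biUnion (extensions · j)) = ∑ i, Fintype.card (i ⟶ j) * #(A.filter (·.1.2.1 = i)) := by
  rw [card_biUnion fun x _ y _ h => disjoint_extensions h j,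
    ← sum_fiberwise A (·.1.2.1) fun x => #(extensions x j)]
  refine sum_congr rfl fun i _ => ?_
  rw [sum_congr rfl fun x hx => by rw [card_extensions, (mem_filter.1 hx).2], sum_const,
    smul_eq_mul, mul_comm]

theorem card_filter_length_succ_le {σ : Finset (QPath V × ι)}
    (hσ : PrefixClosed (σ : Set (QPath V × ι))) (l : ℕ) (j : V) :
    #(σ.filter fun x => x.1.2.2.length = l + 1 ∧ x.1.2.1 = j) ≤
      ∑ i, Fintype.card (i ⟶ j) * #(σ.filter fun x => x.1.2.2.length = l ∧ x.1.2.1 = i) := by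
  have hsub : (σ.filter fun x => x.1.2.2.length = l + 1 ∧ x.1.2.1 = j) ⊆
      (σ.filter (·.1.2.2.length = l)).biUnion (extensions · j) := by
    rintro ⟨⟨a, c, p⟩, r⟩ hx
    obtain ⟨hxσ, hlen, rfl⟩ := mem_filter.1 hx
    cases p with
    | nil => simp at hlen
    | cons q α =>
      refine mem_biUnion.2 ⟨(⟨a, _, q⟩, r), mem_filter.2 ⟨?_, ?_⟩, mem_extensions.2 ⟨α, rfl⟩⟩
      · exact prefixClosed_iff.1 hσ ⟨a, _, q⟩ _ α r hxσ
      · simpa using hlen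
  calc _ ≤ _ := card_le_card hsub
    _ = _ := by simp only [card_biUnion_extensions, filter_filter]

noncomputable def extend (A : Finset (QPath V × ι)) : Finset (QPath V × ι) :=
  A.biUnion fun x => univ.biUnion (extensions x)

theorem mem_extend {A : Finset (QPath V × ι)} {z : QPath V × ι} :
    z ∈ extend A ↔ ∃ x ∈ A, ∃ (j : V) (α : x.1.2.1 ⟶ j), (x.1.cons α, x.2) = z := by
  simp only [extend, mem_biUnion, mem_univ, true_and, mem_extensions]

theorem filter_extend (A : Finset (QPath V × ι)) (j : V) :
    (extend A).filter (·.1.2.1 = j) = A.biUnion (extensions · j) := by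
  ext z
  simp only [mem_filter, mem_extend, mem_biUnion, mem_extensions]
  constructor
  · rintro ⟨⟨x, hx, _, α, rfl⟩, rfl⟩
    exact ⟨x, hx, α, rfl⟩
  · rintro ⟨x, hx, α, rfl⟩
    exact ⟨⟨x, hx, j, α, rfl⟩, rfl⟩

theorem exists_subset_extend (A : Finset (QPath V × ι)) (k : V → ℕ) :
    ∃ B ⊆ extend A,
      ∀ j, #(B.filter (·.1.2.1 = j)) = min (k j) #((extend A).filter (·.1.2.1 = j)) :=
  exists_subset_card_filter_eq _ _ _ fun _ => min_le_right _ _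

/-- One-arrow extensions of `A`, `k j` of them ending at `j` when `A` has that many
(otherwise all of them). -/
noncomputable def nextLayer (A : Finset (QPath V × ι)) (k : V → ℕ) : Finset (QPath V × ι) :=
  (exists_subset_extend A k).choose

theorem nextLayer_subset (A : Finset (QPath V × ι)) (k : V → ℕ) : nextLayer A k ⊆ extend A :=
  (exists_subset_extend A k).choose_spec.1

theorem card_filter_nextLayer {A : Finset (QPath V × ι)} {k : V → ℕ} {j : V}
    (hk : k j ≤ ∑ i, Fintype.card (i ⟶ j) * #(A.filter (·.1.2.1 = i))) :
    #((nextLayer A k).filter (·.1.2.1 = j)) = k j := by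
  rw [nextLayer, (exists_subset_extend A k).choose_spec.2, filter_extend, card_biUnion_extensions,
    min_eq_left hk]

variable [Fintype ι]

noncomputable def roots (e : ι → V) : Finset (QPath V × ι) :=
  univ.map ⟨fun r => (⟨e r, e r, .nil⟩, r), fun _ _ h => congrArg Prod.snd h⟩

noncomputable def layers (e : ι → V) (m : ℕ → V → ℕ) : ℕ → Finset (QPath V × ι)
  | 0 => roots e
  | l + 1 => nextLayer (layers e m l) (m (l + 1))

variable {e : ι → V} {m : ℕ → V → ℕ}

theorem source_eq_and_length_eq_of_mem_layers :
    ∀ {l : ℕ} {x : QPath V × ι}, x ∈ layers e m l → x.1.1 = e x.2 ∧ x.1.2.2.length = l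
  | 0, _, hx => by
    obtain ⟨r, -, rfl⟩ := mem_map.1 hx
    exact ⟨rfl, rfl⟩
  | l + 1, _, hx => by
    obtain ⟨y, hy, j, α, rfl⟩ := mem_extend.1 (nextLayer_subset _ _ hx)
    obtain ⟨hsource, hlength⟩ := source_eq_and_length_eq_of_mem_layers hy
    exact ⟨hsource, congrArg (· + 1) hlength⟩

theorem mem_layers_of_cons_mem {l : ℕ} {y : QPath V} {j : V} {α : y.2.1 ⟶ j} {r : ι}
    (h : (y.cons α, r) ∈ layers e m (l + 1)) : (y, r) ∈ layers e m l := by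
  obtain ⟨x, hx, j, β, hxy⟩ := mem_extend.1 (nextLayer_subset _ _ h)
  obtain ⟨hpath, hlabel⟩ := Prod.mk.inj hxy
  rwa [← (eq_and_heq_of_cons_eq_cons hpath).1, ← hlabel]

theorem card_filter_layers {L : ℕ} (he : ∀ j, #(univ.filter (e · = j)) = m 0 j)
    (H : ∀ l < L, ∀ j, m (l + 1) j ≤ ∑ i, Fintype.card (i ⟶ j) * m l i) :
    ∀ l ≤ L, ∀ j, #((layers e m l).filter (·.1.2.1 = j)) = m l j
  | 0, _, j => by rw [← he j, layers, roots, filter_map, card_map]; rfl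
  | l + 1, hl, j => card_filter_nextLayer <| by
    simpa only [card_filter_layers he H l (Nat.le_of_succ_le hl)] using H l hl j

noncomputable def layeredSkeleton (e : ι → V) (m : ℕ → V → ℕ) (L : ℕ) :
    Finset (QPath V × ι) :=
  (range (L + 1)).biUnion (layers e m)

theorem mem_layeredSkeleton {L : ℕ} {x : QPath V × ι} :
    x ∈ layeredSkeleton e m L ↔ ∃ l ≤ L, x ∈ layers e m l := by
  simp only [layeredSkeleton, mem_biUnion, mem_range, Nat.lt_succ_iff]

theorem sep_layeredSkeleton {L l : ℕ} (hl : l ≤ L) (j : V) :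
    {x ∈ (layeredSkeleton e m L : Set (QPath V × ι)) |
        x.1.2.2.length = l ∧ x.1.2.1 = j} = ↑((layers e m l).filter (·.1.2.1 = j)) := by
  ext x
  simp only [Set.mem_ofPred_eq, coe_filter, mem_coe, mem_layeredSkeleton]
  constructor
  · rintro ⟨⟨l', -, hx⟩, rfl, hj⟩
    rw [← (source_eq_and_length_eq_of_mem_layers hx).2] at hx
    exact ⟨hx, hj⟩
  · rintro ⟨hx, hj⟩
    exact ⟨⟨l, hl, hx⟩, (source_eq_and_length_eq_of_mem_layers hx).2, hj⟩

theorem isSkeleton_layeredSkeleton {L t : ℕ} {e : Fin t → V}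
    (he : ∀ j, #(univ.filter (e · = j)) = m 0 j)
    (H : ∀ l < L, ∀ j, m (l + 1) j ≤ ∑ i, Fintype.card (i ⟶ j) * m l i) :
    IsSkeleton L m t e (layeredSkeleton e m L) := by
  refine ⟨finite_toSet _, fun x hx => ?_, prefixClosed_iff.2 fun y j α r hy => ?_,
    fun l hl j => ?_⟩
  · obtain ⟨l, hl, hx⟩ := mem_layeredSkeleton.1 hx
    obtain ⟨hsource, rfl⟩ := source_eq_and_length_eq_of_mem_layers hx
    exact ⟨hsource, hl⟩
  · obtain ⟨l, hl, hy⟩ := mem_layeredSkeleton.1 hy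
    obtain ⟨-, rfl⟩ := source_eq_and_length_eq_of_mem_layers hy
    exact mem_layeredSkeleton.2 ⟨_, Nat.le_of_succ_le hl, mem_layers_of_cons_mem hy⟩
  · rw [sep_layeredSkeleton hl, Set.ncard_coe_finset, card_filter_layers he H l hl]

end Labelled

end QPath

theorem exists_fin_card_filter_eq {β : Type*} [Fintype β] [DecidableEq β] (k : β → ℕ) :
    ∃ (t : ℕ) (e : Fin t → β), ∀ b, #(univ.filter (e · = b)) = k b := by
  let E := Fintype.equivFin (Σ b, Fin (k b))
  refine ⟨_, fun r => (E.symm r).1, fun b => ?_⟩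
  rw [← Fintype.card_subtype, Fintype.card_congr ((E.symm.subtypeEquiv fun _ => Iff.rfl).trans
    (Equiv.sigmaSubtype b)), Fintype.card_fin]

/-- A skeleton compatible with the layer data `(m_0, …, m_L)` exists (for some choice of
starting vertices realizing `m_0`) if and only if for all `l < L` and every vertex `j`,
`∑_i a_{ij} · m_{l,i} ≥ m_{l+1,j}`, where `a_{ij}` is the number of arrows `i ⟶ j`. -/
theorem exists_skeleton_iff {V : Type uv} [Quiver.{uq + 1} V] [Fintype V]
    [∀ a b : V, Fintype (a ⟶ b)] (L : ℕ) (m : ℕ → V → ℕ) :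
    (∃ (t : ℕ) (e : Fin t → V),
        (∀ j : V, {r : Fin t | e r = j}.ncard = m 0 j) ∧
        ∃ σ : Set (QPath V × Fin t), IsSkeleton L m t e σ) ↔
      ∀ l < L, ∀ j : V,
        m (l + 1) j ≤ ∑ i : V, Fintype.card (i ⟶ j) * m l i := by
  classical
  constructor
  · rintro ⟨t, e, -, σ, hfin, -, hclosed, hcount⟩ l hl j
    obtain ⟨F, rfl⟩ := hfin.exists_finset_coe
    have hcard : ∀ l ≤ L, ∀ i, #(F.filter fun x => x.1.2.2.length = l ∧ x.1.2.1 = i) = m l i :=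
      fun l hl i => by rw [← hcount l hl i, ncard_sep_coe]
    calc m (l + 1) j = _ := (hcard (l + 1) hl j).symm
      _ ≤ _ := QPath.card_filter_length_succ_le hclosed l j
      _ = _ := by simp only [hcard l hl.le]
  · intro H
    obtain ⟨t, e, he⟩ := exists_fin_card_filter_eq (m 0)
    refine ⟨t, e, fun j => ?_, _, QPath.isSkeleton_layeredSkeleton he H⟩
    rw [Set.ncard_eq_toFinset_card', Set.toFinset_ofPred, he]
end

section
/- Let Q be a finite quiver with arrow-count matrix (a_{ij}) and fix L ≥ 0. Let σ and σ̃ be two skeleta compatible with the same layer data m = (m_0, …, m_L) ∈ (ℕ^n)^{L+1} (i.e., for each l and j, both σ_l and σ̃_l contain exactly m_{l,j} paths of length l ending at vertex j, and both are closed under initial subpaths). For a skeleton σ, call a pair (α, (p,r)) with (p,r) ∈ σ, α an arrow composable with p, length(αp) ≤ L, and (αp, r) ∉ σ a σ-critical path, and let σ(αp) be the set of elements (q,s) ∈ σ with length(q) ≥ length(αp) and q ending at the same vertex as αp. Then ∑_{αp σ-critical} |σ(αp)| = ∑_{α̃p̃ σ̃-critical} |σ̃(α̃p̃)|; i.e.,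 this number N(m) depends only on m and not on the choice of skeleton. -/
universe uv uq

/-- The data of a would-be σ-critical path: an element `(p, r)` of the skeleton together
with an arrow `α : end(p) ⟶ j`. -/
abbrev CritDatum (V : Type uv) [Quiver.{uq + 1} V] (t : ℕ) :=
  Σ (x : QPath V × Fin t) (j : V), x.1.2.1 ⟶ j

/-- `c = ((p,r), j, α)` is σ-critical if `(p,r) ∈ σ`, `length (α p) ≤ L`, and the extended
path `(α p, r)` does not belong to `σ`. -/
def IsCritical {V : Type uv} [Quiver.{uq + 1} V] {t : ℕ} (L : ℕ)
    (σ : Set (QPath V × Fin t)) (c : CritDatum V t) : Prop :=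
  c.1 ∈ σ ∧ c.1.1.2.2.length + 1 ≤ L ∧
    (⟨⟨c.1.1.1, c.2.1, c.1.1.2.2.cons c.2.2⟩, c.1.2⟩ : QPath V × Fin t) ∉ σ

/-- `N(σ) = ∑_{αp σ-critical} |σ(αp)|`, counted as the number of pairs of a σ-critical
path `αp` and an element `(q,s) ∈ σ` with `length q ≥ length (αp)` ending at the same
vertex as `αp`. -/
noncomputable def Nval {V : Type uv} [Quiver.{uq + 1} V] {t : ℕ} (L : ℕ)
    (σ : Set (QPath V × Fin t)) : ℕ :=
  {z : CritDatum V t × (QPath V × Fin t) |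
    IsCritical L σ z.1 ∧ z.2 ∈ σ ∧ z.2.1.2.1 = z.1.2.1 ∧
      z.1.1.1.2.2.length + 1 ≤ z.2.1.2.2.length}.ncard

/-!
Sort the σ-critical paths `αp` by the length `l + 1` and end vertex `j` of `αp`. Every
extension `αp` of a path `p ∈ σ` of length `l` is either σ-critical or lies in `σ`, and since
`σ` is closed under initial subpaths every path of `σ` of length `l + 1` is such an extension
in exactly one way; hence there are `∑ᵢ a_{ij} m_{l,i} - m_{l+1,j}` critical paths of this
kind. Each of them contributes `|σ(αp)| = ∑_{l' > l} m_{l',j}`, so `N(σ)` is a sum of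
products of expressions in `m` alone.
-/

open Finset

open scoped Classical

section ExtendedPath

variable {V : Type uv} [Quiver.{uq + 1} V] {t : ℕ}

/-- The path `(α p, r)` of the datum `((p, r), j, α)`. -/
def extendedPath (c : CritDatum V t) : QPath V × Fin t :=
  ⟨⟨c.1.1.1, c.2.1, c.1.1.2.2.cons c.2.2⟩, c.1.2⟩

lemma length_extendedPath (c : CritDatum V t) :
    (extendedPath c).1.2.2.length = c.1.1.2.2.length + 1 :=
  rfl

lemma extendedPath_injective :
    Function.Injective (extendedPath : CritDatum V t → QPath V × Fin t) := by
  rintro ⟨⟨⟨a, b, p⟩, r⟩, j, α⟩ ⟨⟨⟨a', b', p'⟩, r'⟩, j', α'⟩ h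
  simp only [extendedPath, Prod.mk.injEq] at h
  obtain ⟨h, rfl⟩ := h
  obtain ⟨rfl, h⟩ := Sigma.mk.inj_iff.mp h
  obtain ⟨rfl, h⟩ := Sigma.mk.inj_iff.mp (eq_of_heq h)
  have hcons := eq_of_heq h
  obtain rfl := Quiver.Path.obj_eq_of_cons_eq_cons hcons
  obtain rfl := eq_of_heq (Quiver.Path.heq_of_cons_eq_cons hcons)
  obtain rfl := eq_of_heq (Quiver.Path.hom_heq_of_cons_eq_cons hcons)
  rfl

end ExtendedPath

lemma isCritical_iff {V : Type uv} [Quiver.{uq + 1} V] {t : ℕ} {L : ℕ}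
    {σ : Set (QPath V × Fin t)} {c : CritDatum V t} :
    IsCritical L σ c ↔ c.1 ∈ σ ∧ c.1.1.2.2.length < L ∧ extendedPath c ∉ σ :=
  Iff.rfl

namespace IsSkeleton

variable {V : Type uv} [Quiver.{uq + 1} V] {L : ℕ} {m : ℕ → V → ℕ} {t : ℕ} {e : Fin t → V}
  {σ : Set (QPath V × Fin t)}

lemma length_le (hσ : IsSkeleton L m t e σ) {x : QPath V × Fin t} (hx : x ∈ σ) :
    x.1.2.2.length ≤ L :=
  (hσ.2.1 x hx).2

lemma exists_extendedPath_eq (hσ : IsSkeleton L m t e σ) {x : QPath V × Fin t} (hx : x ∈ σ)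
    (hlen : x.1.2.2.length ≠ 0) : ∃ c : CritDatum V t, c.1 ∈ σ ∧ extendedPath c = x := by
  obtain ⟨⟨a, b, p⟩, r⟩ := x
  cases p with
  | nil => exact absurd rfl hlen
  | cons q α =>
    exact ⟨⟨⟨⟨a, _, q⟩, r⟩, _, α⟩, hσ.2.2.1 _ hx _ q (Quiver.Path.nil.cons α) rfl, rfl⟩

end IsSkeleton

namespace Skeleton

variable {V : Type uv} [Quiver.{uq + 1} V] {t : ℕ}

noncomputable def layer (s : Finset (QPath V × Fin t)) (l : ℕ) (j : V) :
    Finset (QPath V × Fin t) :=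
  s.filter fun x => x.1.2.2.length = l ∧ x.1.2.1 = j

/-- The set `σ(αp)` for any `αp` of length `l + 1` ending at `j`. -/
noncomputable def tail (s : Finset (QPath V × Fin t)) (l : ℕ) (j : V) :
    Finset (QPath V × Fin t) :=
  s.filter fun x => x.1.2.1 = j ∧ l < x.1.2.2.length

section Extensions

variable [Fintype V] [∀ a b : V, Fintype (a ⟶ b)]

noncomputable def extensions (s : Finset (QPath V × Fin t)) (l : ℕ) (j : V) :
    Finset (CritDatum V t) :=
  (s.filter fun x => x.1.2.2.length = l).sigma fun _ => univ.filter fun y => y.1 = j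

/-- The σ-critical paths of length `l + 1` ending at `j`, provided `l < L`. -/
noncomputable def criticalAt (s : Finset (QPath V × Fin t)) (l : ℕ) (j : V) :
    Finset (CritDatum V t) :=
  (extensions s l j).filter fun c => extendedPath c ∉ s

lemma mem_extensions {s : Finset (QPath V × Fin t)} {l : ℕ} {j : V} {c : CritDatum V t} :
    c ∈ extensions s l j ↔ c.1 ∈ s ∧ c.1.1.2.2.length = l ∧ c.2.1 = j := by
  simp [extensions, and_assoc]

lemma card_arrows_to (i j : V) :
    #(univ.filter fun y : Σ j', i ⟶ j' => y.1 = j) = Fintype.card (i ⟶ j) := by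
  rw [card_filter, ← univ_sigma_univ, sum_sigma]
  simp [apply_ite Finset.card, Finset.card_univ]

lemma card_extensions (s : Finset (QPath V × Fin t)) (l : ℕ) (j : V) :
    #(extensions s l j) = ∑ i, Fintype.card (i ⟶ j) * #(layer s l i) := by
  rw [extensions, card_sigma, ← sum_fiberwise _ (fun x => x.1.2.1)]
  refine sum_congr rfl fun i _ => ?_
  rw [filter_filter, sum_const_nat fun x hx => by rw [(mem_filter.mp hx).2.2, card_arrows_to],
    mul_comm]
  rfl

lemma Nval_coe_eq_sum (L : ℕ) (s : Finset (QPath V × Fin t)) :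
    Nval L (s : Set (QPath V × Fin t))
      = ∑ l ∈ range L, ∑ j, #(criticalAt s l j) * #(tail s l j) := by
  have hset : {z : CritDatum V t × (QPath V × Fin t) |
      IsCritical L (s : Set (QPath V × Fin t)) z.1 ∧ z.2 ∈ (s : Set (QPath V × Fin t)) ∧
        z.2.1.2.1 = z.1.2.1 ∧ z.1.1.1.2.2.length + 1 ≤ z.2.1.2.2.length}
      = ↑((range L ×ˢ univ).biUnion fun p => criticalAt s p.1 p.2 ×ˢ tail s p.1 p.2) := by
    ext ⟨c, y⟩
    simp only [isCritical_iff, criticalAt, tail, mem_extensions, coe_biUnion, coe_product,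
      coe_filter, mem_coe, Set.mem_iUnion, Set.mem_prod, Set.mem_ofPred_eq, mem_range, mem_univ,
      and_true, Prod.exists, exists_prop]
    constructor
    · rintro ⟨⟨hc, hlen, hext⟩, hy, hyj, hly⟩
      exact ⟨_, _, hlen, ⟨⟨hc, rfl, rfl⟩, hext⟩, hy, hyj, hly⟩
    · rintro ⟨l, j, hl, ⟨⟨hc, rfl, rfl⟩, hext⟩, hy, hyj, hly⟩
      exact ⟨⟨hc, hl, hext⟩, hy, hyj, hly⟩
  have hdisj : ((range L ×ˢ univ : Finset (ℕ × V)) : Set (ℕ × V)).PairwiseDisjoint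
      fun p => criticalAt s p.1 p.2 ×ˢ tail s p.1 p.2 := by
    rintro ⟨l, j⟩ - ⟨l', j'⟩ - hne
    refine disjoint_left.mpr fun ⟨c, y⟩ h h' => hne ?_
    simp only [criticalAt, mem_product, mem_filter, mem_extensions] at h h'
    rw [← h.1.1.2.1, ← h.1.1.2.2, h'.1.1.2.1, h'.1.1.2.2]
  rw [Nval, hset, Set.ncard_coe_finset, card_biUnion hdisj, sum_product]
  simp only [card_product]

end Extensions

end Skeleton

namespace IsSkeleton

open Skeleton

variable {V : Type uv} [Quiver.{uq + 1} V] {L : ℕ} {m : ℕ → V → ℕ} {t : ℕ} {e : Fin t → V}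
  {s : Finset (QPath V × Fin t)}

lemma card_layer (hs : IsSkeleton L m t e (s : Set (QPath V × Fin t))) {l : ℕ} (hl : l ≤ L)
    (j : V) : #(layer s l j) = m l j := by
  rw [← hs.2.2.2 l hl j, ← Set.ncard_coe_finset, layer, coe_filter]
  rfl

lemma card_tail (hs : IsSkeleton L m t e (s : Set (QPath V × Fin t))) (l : ℕ) (j : V) :
    #(tail s l j) = ∑ l' ∈ Icc (l + 1) L, m l' j := by
  rw [tail, card_eq_sum_card_fiberwise (f := fun x => x.1.2.2.length) (t := Icc (l + 1) L)
    fun x hx => mem_Icc.mpr ⟨(mem_filter.mp hx).2.2, hs.length_le (mem_filter.mp hx).1⟩]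
  refine sum_congr rfl fun l' hl' => ?_
  rw [← hs.card_layer (mem_Icc.mp hl').2 j, layer, filter_filter]
  congr 1
  refine filter_congr fun x _ => ?_
  have := (mem_Icc.mp hl').1
  constructor
  · rintro ⟨⟨hj, -⟩, hl⟩
    exact ⟨hl, hj⟩
  · rintro ⟨hl, hj⟩
    exact ⟨⟨hj, by omega⟩, hl⟩

variable [Fintype V] [∀ a b : V, Fintype (a ⟶ b)]

lemma card_filter_extendedPath_mem (hs : IsSkeleton L m t e (s : Set (QPath V × Fin t)))
    {l : ℕ} (hl : l + 1 ≤ L) (j : V) :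
    #((extensions s l j).filter fun c => extendedPath c ∈ s) = m (l + 1) j := by
  rw [← hs.card_layer hl j]
  refine card_bij (fun c _ => extendedPath c) (fun c hc => ?_)
    (fun c _ c' _ h => extendedPath_injective h) (fun x hx => ?_)
  · obtain ⟨⟨-, hlen, hj⟩, hext⟩ := mem_filter.mp hc |>.imp_left mem_extensions.mp
    exact mem_filter.mpr ⟨hext, by rw [length_extendedPath, hlen], hj⟩
  · obtain ⟨hxs, hlen, rfl⟩ := mem_filter.mp hx
    obtain ⟨c, hc, rfl⟩ := hs.exists_extendedPath_eq (mem_coe.mpr hxs) (by omega)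
    rw [length_extendedPath] at hlen
    exact ⟨c, mem_filter.mpr ⟨mem_extensions.mpr ⟨hc, by omega, rfl⟩, hxs⟩, rfl⟩

lemma card_criticalAt (hs : IsSkeleton L m t e (s : Set (QPath V × Fin t))) {l : ℕ}
    (hl : l + 1 ≤ L) (j : V) :
    #(criticalAt s l j) = ∑ i, Fintype.card (i ⟶ j) * m l i - m (l + 1) j := by
  have hsplit :=
    card_filter_add_card_filter_not (s := extensions s l j) (fun c => extendedPath c ∈ s)
  rw [hs.card_filter_extendedPath_mem hl j, card_extensions] at hsplit
  simp only [hs.card_layer (Nat.le_of_succ_le hl)] at hsplit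
  rw [criticalAt]
  omega

end IsSkeleton

/-- The number `N(m)`. For the layer data of a skeleton the subtraction does not truncate. -/
noncomputable def layerNval {V : Type uv} [Quiver.{uq + 1} V] [Fintype V]
    [∀ a b : V, Fintype (a ⟶ b)] (L : ℕ) (m : ℕ → V → ℕ) : ℕ :=
  ∑ l ∈ range L, ∑ j, (∑ i, Fintype.card (i ⟶ j) * m l i - m (l + 1) j) *
    ∑ l' ∈ Icc (l + 1) L, m l' j

lemma IsSkeleton.Nval_eq_layerNval {V : Type uv} [Quiver.{uq + 1} V] [Fintype V]
    [∀ a b : V, Fintype (a ⟶ b)] {L : ℕ} {m : ℕ → V → ℕ} {t : ℕ} {e : Fin t → V}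
    {σ : Set (QPath V × Fin t)} (hσ : IsSkeleton L m t e σ) : Nval L σ = layerNval L m := by
  obtain ⟨s, rfl⟩ : ∃ s : Finset (QPath V × Fin t), ↑s = σ := ⟨_, hσ.1.coe_toFinset⟩
  rw [Skeleton.Nval_coe_eq_sum, layerNval]
  refine sum_congr rfl fun l hl => sum_congr rfl fun j _ => ?_
  rw [hσ.card_criticalAt (mem_range.mp hl) j, hσ.card_tail]

/-- The number `N(m) = ∑_{αp σ-critical} |σ(αp)|` is the same for any two skeleta `σ`, `σ̃`
compatible with the same layer data `m`. -/
theorem Nval_eq_of_isSkeleton {V : Type uv} [Quiver.{uq + 1} V] [Fintype V]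
    [∀ a b : V, Fintype (a ⟶ b)] (L : ℕ) (m : ℕ → V → ℕ)
    {t t' : ℕ} (e : Fin t → V) (e' : Fin t' → V)
    (he : ∀ j : V, {r : Fin t | e r = j}.ncard = m 0 j)
    (he' : ∀ j : V, {r : Fin t' | e' r = j}.ncard = m 0 j)
    (σ : Set (QPath V × Fin t)) (σ' : Set (QPath V × Fin t'))
    (hσ : IsSkeleton L m t e σ) (hσ' : IsSkeleton L m t' e' σ') :
    Nval L σ = Nval L σ' := by
  rw [hσ.Nval_eq_layerNval, hσ'.Nval_eq_layerNval]
end
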